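/- Let b : ℝ → ℝ be C¹, let ε > 0 and let ξ₁, τ be real numbers with τ ≠ 0 and τ² ≠ ξ₁². Suppose V₂ : ℝ → ℂ is C² and satisfies ε² V₂″(x₂) + (τ² − ξ₁² − b(x₂)² − ε ξ₁ b′(x₂)/τ) V₂(x₂) = 0 for all x₂. Define V₁ := i(b τ V₂ − ε ξ₁ V₂′)/(τ² − ξ₁²) and R := i(ξ₁ b V₂ − ε τ V₂′)/(τ² − ξ₁²). Then U(t, x₁, x₂) := exp(i(ξ₁ x₁ − τ t)/ε) · (R(x₂), V₁(x₂), V₂(x₂)) is an exact solution of the linearized rotating shallow water system with Coriolis parameter b(x₂)/ε. -/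

import Mathlib

open Complex

def SolvesRSW (Bt : ℝ → ℝ) (ρ u₁ u₂ : ℝ → ℝ → ℝ → ℂ) : Prop :=
  ∀ t x₁ x₂ : ℝ,
    deriv (fun s => ρ s x₁ x₂) t + deriv (fun y => u₁ t y x₂) x₁
        + deriv (fun y => u₂ t x₁ y) x₂ = 0 ∧
    deriv (fun s => u₁ s x₁ x₂) t + deriv (fun y => ρ t y x₂) x₁
        - (Bt x₂ : ℂ) * u₂ t x₁ x₂ = 0 ∧
    deriv (fun s => u₂ s x₁ x₂) t + deriv (fun y => ρ t x₁ y) x₂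
        + (Bt x₂ : ℂ) * u₁ t x₁ x₂ = 0

/-!
A plane wave `exp (i (ξ₁ x₁ - τ t) / ε) · (R, V₁, V₂)(x₂)` turns `∂ₜ` into `-iτ/ε` and `∂_{x₁}`
into `iξ₁/ε`, so it solves the system once its profile solves two algebraic equations and one
ODE in `x₂`. The algebraic ones are a 2×2 linear system in `(R, V₁)` with determinant
`-(τ² - ξ₁²)/ε²`, whose solution is the given formula; substituting it into the third equation
yields, after multiplication by `ε (τ² - ξ₁²) / (-iτ)`, exactly the scalar ODE for `V₂`.
-/

noncomputable section

def planeWave (ξ₁ τ ε t x₁ : ℝ) : ℂ :=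
  exp (I * ((ξ₁ * x₁ - τ * t : ℝ)) / (ε : ℝ))

theorem hasDerivAt_planeWave_time (ξ₁ τ ε x₁ t : ℝ) :
    HasDerivAt (fun s => planeWave ξ₁ τ ε s x₁) (-I * τ / ε * planeWave ξ₁ τ ε t x₁) t := by
  have hphase : HasDerivAt (fun s : ℝ => ξ₁ * x₁ - τ * s) (-τ) t := by
    simpa using ((hasDerivAt_id t).const_mul τ).const_sub (ξ₁ * x₁)
  exact ((hphase.ofReal_comp.const_mul I).div_const (ε : ℂ)).cexp.congr_deriv
    (by rw [planeWave]; push_cast; ring)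

theorem hasDerivAt_planeWave_space (ξ₁ τ ε t x₁ : ℝ) :
    HasDerivAt (fun y => planeWave ξ₁ τ ε t y) (I * ξ₁ / ε * planeWave ξ₁ τ ε t x₁) x₁ := by
  have hphase : HasDerivAt (fun y : ℝ => ξ₁ * y - τ * t) ξ₁ x₁ := by
    simpa using ((hasDerivAt_id x₁).const_mul ξ₁).sub_const (τ * t)
  exact ((hphase.ofReal_comp.const_mul I).div_const (ε : ℂ)).cexp.congr_deriv
    (by rw [planeWave]; ring)

theorem solvesRSW_planeWave (B : ℝ → ℝ) (ξ₁ τ ε : ℝ) (R V₁ V₂ : ℝ → ℂ)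
    (h : ∀ x,
      -I * τ / ε * R x + I * ξ₁ / ε * V₁ x + deriv V₂ x = 0 ∧
      -I * τ / ε * V₁ x + I * ξ₁ / ε * R x - B x * V₂ x = 0 ∧
      -I * τ / ε * V₂ x + deriv R x + B x * V₁ x = 0) :
    SolvesRSW B (fun t x₁ x₂ => planeWave ξ₁ τ ε t x₁ * R x₂)
      (fun t x₁ x₂ => planeWave ξ₁ τ ε t x₁ * V₁ x₂)
      (fun t x₁ x₂ => planeWave ξ₁ τ ε t x₁ * V₂ x₂) := by
  intro t x₁ x₂
  obtain ⟨h₁, h₂, h₃⟩ := h x₂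
  have ht (C : ℂ) := ((hasDerivAt_planeWave_time ξ₁ τ ε x₁ t).mul_const C).deriv
  have hx (C : ℂ) := ((hasDerivAt_planeWave_space ξ₁ τ ε t x₁).mul_const C).deriv
  simp only [ht, hx, deriv_const_mul_field']
  set E := planeWave ξ₁ τ ε t x₁
  exact ⟨by linear_combination E * h₁, by linear_combination E * h₂, by linear_combination E * h₃⟩

section Profile

variable (b : ℝ → ℝ) (ε ξ₁ τ : ℝ) (V₂ : ℝ → ℂ)

def velocityProfile₁ (x : ℝ) : ℂ :=
  I * ((b x : ℂ) * (τ : ℂ) * V₂ x - (ε : ℂ) * (ξ₁ : ℂ) * deriv V₂ x) / ((τ ^ 2 - ξ₁ ^ 2 : ℝ) : ℂ)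

def heightProfile (x : ℝ) : ℂ :=
  I * ((ξ₁ : ℂ) * (b x : ℂ) * V₂ x - (ε : ℂ) * (τ : ℂ) * deriv V₂ x) / ((τ ^ 2 - ξ₁ ^ 2 : ℝ) : ℂ)

variable {b ε ξ₁ τ V₂}

theorem hasDerivAt_heightProfile {x b' : ℝ} {v' v'' : ℂ} (hb : HasDerivAt b b' x)
    (hV₂ : HasDerivAt V₂ v' x) (hV₂' : HasDerivAt (deriv V₂) v'' x) :
    HasDerivAt (heightProfile b ε ξ₁ τ V₂)
      (I * (ξ₁ * (b' * V₂ x + b x * v') - ε * τ * v'') / ((τ ^ 2 - ξ₁ ^ 2 : ℝ) : ℂ)) x :=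
  ((((hb.ofReal_comp.const_mul (ξ₁ : ℂ)).mul hV₂).sub (hV₂'.const_mul _)).const_mul I).div_const
    _ |>.congr_deriv (by ring)

theorem profile_continuity_eq (hε : ε ≠ 0) (hττ : τ ^ 2 ≠ ξ₁ ^ 2) (x : ℝ) :
    -I * τ / ε * heightProfile b ε ξ₁ τ V₂ x + I * ξ₁ / ε * velocityProfile₁ b ε ξ₁ τ V₂ x
      + deriv V₂ x = 0 := by
  have hε' : (ε : ℂ) ≠ 0 := ofReal_ne_zero.2 hε
  have hD : (τ : ℂ) ^ 2 - ξ₁ ^ 2 ≠ 0 := by exact_mod_cast sub_ne_zero.2 hττ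
  rw [heightProfile, velocityProfile₁]
  push_cast
  field_simp
  rw [I_sq]
  ring

theorem profile_momentum₁_eq (hε : ε ≠ 0) (hττ : τ ^ 2 ≠ ξ₁ ^ 2) (x : ℝ) :
    -I * τ / ε * velocityProfile₁ b ε ξ₁ τ V₂ x + I * ξ₁ / ε * heightProfile b ε ξ₁ τ V₂ x
      - ((b x / ε : ℝ) : ℂ) * V₂ x = 0 := by
  have hε' : (ε : ℂ) ≠ 0 := ofReal_ne_zero.2 hε
  have hD : (τ : ℂ) ^ 2 - ξ₁ ^ 2 ≠ 0 := by exact_mod_cast sub_ne_zero.2 hττ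
  rw [heightProfile, velocityProfile₁]
  push_cast
  field_simp
  rw [I_sq]
  ring

theorem profile_momentum₂_eq (hε : ε ≠ 0) (hτ : τ ≠ 0) (hττ : τ ^ 2 ≠ ξ₁ ^ 2) {x : ℝ}
    (hb : DifferentiableAt ℝ b x) (hV₂ : DifferentiableAt ℝ V₂ x)
    (hV₂' : DifferentiableAt ℝ (deriv V₂) x)
    (hODE : (ε ^ 2 : ℂ) * deriv (deriv V₂) x
        + ((τ ^ 2 - ξ₁ ^ 2 - (b x) ^ 2 - ε * ξ₁ * deriv b x / τ : ℝ) : ℂ) * V₂ x = 0) :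
    -I * τ / ε * V₂ x + deriv (heightProfile b ε ξ₁ τ V₂) x
      + ((b x / ε : ℝ) : ℂ) * velocityProfile₁ b ε ξ₁ τ V₂ x = 0 := by
  have hε' : (ε : ℂ) ≠ 0 := ofReal_ne_zero.2 hε
  have hτ' : (τ : ℂ) ≠ 0 := ofReal_ne_zero.2 hτ
  have hD : (τ : ℂ) ^ 2 - ξ₁ ^ 2 ≠ 0 := by exact_mod_cast sub_ne_zero.2 hττ
  rw [(hasDerivAt_heightProfile hb.hasDerivAt hV₂.hasDerivAt hV₂'.hasDerivAt).deriv,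
    velocityProfile₁]
  push_cast at hODE ⊢
  field_simp at hODE ⊢
  linear_combination -I * hODE

end Profile

end

/-- converse of the reduction: a solution of the scalar second
order ODE for the second velocity component yields, via the explicit formulas
for `V₁` and `R`, an exact solution of the linearized rotating shallow water
system with Coriolis parameter `b(x₂)/ε`. -/
theorem scalar_to_RSW_solution (b : ℝ → ℝ) (hb : ContDiff ℝ 1 b)
    (ε : ℝ) (hε : ε > 0) (ξ₁ τ : ℝ) (hτ : τ ≠ 0) (hττ : τ ^ 2 ≠ ξ₁ ^ 2)
    (V₂ : ℝ → ℂ) (hV₂ : ContDiff ℝ 2 V₂)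
    (hODE : ∀ x₂ : ℝ, (ε ^ 2 : ℂ) * deriv (deriv V₂) x₂
        + ((τ ^ 2 - ξ₁ ^ 2 - (b x₂) ^ 2 - ε * ξ₁ * deriv b x₂ / τ : ℝ) : ℂ) * V₂ x₂ = 0) :
    let V₁ : ℝ → ℂ := fun x₂ =>
      Complex.I * ((b x₂ : ℂ) * (τ : ℂ) * V₂ x₂ - (ε : ℂ) * (ξ₁ : ℂ) * deriv V₂ x₂)
        / ((τ ^ 2 - ξ₁ ^ 2 : ℝ) : ℂ)
    let R : ℝ → ℂ := fun x₂ =>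
      Complex.I * ((ξ₁ : ℂ) * (b x₂ : ℂ) * V₂ x₂ - (ε : ℂ) * (τ : ℂ) * deriv V₂ x₂)
        / ((τ ^ 2 - ξ₁ ^ 2 : ℝ) : ℂ)
    SolvesRSW (fun x₂ => b x₂ / ε)
      (fun t x₁ x₂ => Complex.exp (Complex.I * ((ξ₁ * x₁ - τ * t : ℝ)) / (ε : ℝ)) * R x₂)
      (fun t x₁ x₂ => Complex.exp (Complex.I * ((ξ₁ * x₁ - τ * t : ℝ)) / (ε : ℝ)) * V₁ x₂)
      (fun t x₁ x₂ => Complex.exp (Complex.I * ((ξ₁ * x₁ - τ * t : ℝ)) / (ε : ℝ)) * V₂ x₂) := by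
  intro V₁ R
  have hV₂' : ContDiff ℝ 1 (deriv V₂) := hV₂.iterate_deriv' 1 1
  exact solvesRSW_planeWave _ ξ₁ τ ε (heightProfile b ε ξ₁ τ V₂)
    (velocityProfile₁ b ε ξ₁ τ V₂) V₂ fun x =>
      ⟨profile_continuity_eq hε.ne' hττ x, profile_momentum₁_eq hε.ne' hττ x,
        profile_momentum₂_eq hε.ne' hτ hττ (hb.differentiable one_ne_zero).differentiableAt
          ((hV₂.differentiable two_ne_zero).differentiableAt)
          ((hV₂'.differentiable one_ne_zero).differentiableAt) (hODE x)⟩
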